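/- For every x** ∈ (ℓ∞)* = (ℓ¹)**, one has x**(G* x**) = −(w***(x**))², where G is the Gossez operator. In particular, x**(G* x**) ≤ 0 for all x**. -/

import Mathlib

/-! Write a_m = x**(e*_m). Testing x** on finitely supported sign vectors shows that a is
absolutely summable, with sum s say. Testing the adjoint identity on the unit vectors of ℓ¹ gives
(G* x**)_m = S_m + S_{m+1} − x**(e*) for the partial sums S_m of a, so
G* x** = (2s − x**(e*)) e* − u with u_m = T_m + T_{m+1}, where T_m = s − S_m are the tails.
Since u tends to 0 it is the ℓ∞-limit of its truncations, so x**(u) = Σ a_m u_m, and this sum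
telescopes: a_m u_m = T_m² − T_{m+1}², whence x**(u) = T_0² = s². Therefore
x**(G* x**) = (2s − x**(e*)) x**(e*) − s² = −(x**(e*) − s)². -/

noncomputable section
open scoped ENNReal
open Filter

abbrev ell1 := lp (fun _ : ℕ => ℝ) 1
abbrev ellInfty := lp (fun _ : ℕ => ℝ) ∞

/-- The Gossez operator, coordinatewise: (Gx)_m = Σ_{n>m} x_n − Σ_{n<m} x_n. -/
def Gfun (x : ℕ → ℝ) (m : ℕ) : ℝ :=
  (∑' n, if m < n then x n else 0) - ∑ n ∈ Finset.range m, x n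

/-- The all-ones sequence e* ∈ ℓ∞. -/
def eStar : ellInfty :=
  ⟨fun _ => (1 : ℝ), memℓp_infty ⟨1, by rintro r ⟨i, rfl⟩; simp⟩⟩

/-- The m-th standard unit vector e*_m ∈ ℓ∞. -/
def eVec (m : ℕ) : ellInfty := lp.single ∞ m (1 : ℝ)


open Topology Finset

namespace lp

variable {ι : Type*} [DecidableEq ι] {E : ι → Type*} [∀ i, NormedAddCommGroup (E i)]

theorem sum_single_apply {p : ℝ≥0∞} (s : Finset ι) (f : ∀ i, E i) (k : ι) :
    (∑ i ∈ s, lp.single p i (f i)) k = if k ∈ s then f k else 0 := by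
  simp only [lp.coeFn_sum, Finset.sum_apply, lp.coeFn_single, Finset.sum_pi_single]

theorem norm_sum_single_infty_le (s : Finset ι) (f : ∀ i, E i) {C : ℝ} (hC : 0 ≤ C)
    (hf : ∀ i ∈ s, ‖f i‖ ≤ C) : ‖∑ i ∈ s, lp.single ∞ i (f i)‖ ≤ C := by
  refine lp.norm_le_of_forall_le hC fun k => ?_
  rw [sum_single_apply]
  split_ifs with hk
  · exact hf k hk
  · simpa using hC

theorem hasSum_single_infty_of_tendsto_zero (u : lp E ∞)
    (hu : Tendsto (‖u ·‖) cofinite (𝓝 0)) : HasSum (fun i => lp.single ∞ i (u i)) u := by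
  refine Metric.tendsto_nhds.2 fun ε hε => ?_
  have hfin : {i | ¬ ‖u i‖ < ε / 2}.Finite :=
    eventually_cofinite.1 (hu.eventually (gt_mem_nhds (half_pos hε)))
  filter_upwards [eventually_ge_atTop hfin.toFinset] with F hF
  rw [dist_eq_norm]
  refine (lp.norm_le_of_forall_le (half_pos hε).le fun k => ?_).trans_lt (half_lt_self hε)
  rw [lp.coeFn_sub, Pi.sub_apply, sum_single_apply]
  split_ifs with hk
  · simpa using (half_pos hε).le
  · have : ‖u k‖ < ε / 2 := not_not.1 fun h => hk (hF (hfin.mem_toFinset.2 h))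
    simpa using this.le

end lp

namespace StrongDual

variable {ι : Type*} [DecidableEq ι] (φ : StrongDual ℝ (lp (fun _ : ι => ℝ) ∞))

theorem apply_lp_single_infty (i : ι) (c : ℝ) :
    φ (lp.single ∞ i c) = c * φ (lp.single ∞ i 1) := by
  rw [← smul_eq_mul, ← map_smul, ← lp.single_smul, smul_eq_mul, mul_one]

theorem summable_abs_apply_lp_single_infty : Summable fun i => |φ (lp.single ∞ i 1)| := by
  refine summable_of_sum_le (c := ‖φ‖) (fun i => abs_nonneg _) fun s => ?_
  have hsign : ‖∑ i ∈ s, lp.single ∞ i (SignType.sign (φ (lp.single ∞ i 1)) : ℝ)‖ ≤ 1 :=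
    lp.norm_sum_single_infty_le s _ zero_le_one fun i _ => by
      rcases lt_trichotomy (φ (lp.single ∞ i 1)) 0 with h | h | h <;> simp [h]
  calc ∑ i ∈ s, |φ (lp.single ∞ i 1)|
      = φ (∑ i ∈ s, lp.single ∞ i (SignType.sign (φ (lp.single ∞ i 1)) : ℝ)) := by
        simp only [map_sum, apply_lp_single_infty φ _ (SignType.sign _ : ℝ), sign_mul_self]
    _ ≤ ‖φ‖ * 1 := (le_abs_self _).trans ((φ.le_opNorm _).trans (by gcongr))
    _ = ‖φ‖ := mul_one _

end StrongDual

namespace HasSum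

variable {a : ℕ → ℝ} {s : ℝ}

theorem tendsto_two_mul_sub_sum_range_sub_sum_range_succ (h : HasSum a s) :
    Tendsto (fun m => 2 * s - ∑ k ∈ range m, a k - ∑ k ∈ range (m + 1), a k) atTop (𝓝 0) := by
  have hS := h.tendsto_sum_nat
  simpa [two_mul] using
    ((tendsto_const_nhds (x := 2 * s)).sub hS).sub (hS.comp (tendsto_add_atTop_nat 1))

theorem tendsto_sum_range_mul_two_mul_sub_sum_range_sub_sum_range_succ (h : HasSum a s) :
    Tendsto (fun N => ∑ m ∈ range N,
      a m * (2 * s - ∑ k ∈ range m, a k - ∑ k ∈ range (m + 1), a k)) atTop (𝓝 (s ^ 2)) := by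
  have htel (N : ℕ) : ∑ m ∈ range N,
      a m * (2 * s - ∑ k ∈ range m, a k - ∑ k ∈ range (m + 1), a k)
        = s ^ 2 - (s - ∑ k ∈ range N, a k) ^ 2 := by
    calc _ = -∑ m ∈ range N,
          ((s - ∑ k ∈ range (m + 1), a k) ^ 2 - (s - ∑ k ∈ range m, a k) ^ 2) := by
          rw [← sum_neg_distrib]
          refine sum_congr rfl fun m _ => ?_
          rw [sum_range_succ]
          ring
      _ = _ := by
          rw [sum_range_sub (fun m => (s - ∑ k ∈ range m, a k) ^ 2)]
          simp
  have hrem : Tendsto (fun N => (s - ∑ k ∈ range N, a k) ^ 2) atTop (𝓝 0) := by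
    simpa using (tendsto_const_nhds (x := s)).sub h.tendsto_sum_nat |>.pow 2
  simpa [htel] using tendsto_const_nhds.sub hrem

end HasSum

@[simp]
theorem eStar_apply (k : ℕ) : eStar k = 1 := rfl

theorem Gfun_single (m k : ℕ) :
    Gfun (Pi.single m 1) k = (if k < m then 1 else 0) - (if m < k then 1 else 0) := by
  have hterm : ∀ n, (if k < n then (Pi.single m 1 : ℕ → ℝ) n else 0)
      = if n = m then (if k < m then 1 else 0) else 0 :=
    fun n => by by_cases hn : n = m <;> simp [hn]
  rw [Gfun, tsum_congr hterm, tsum_ite_eq]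
  simp [Pi.single_apply]

theorem apply_single_eq_of_apply_eq_Gfun {G : ell1 →L[ℝ] ellInfty}
    (hG : ∀ (x : ell1) (m : ℕ), G x m = Gfun x m) (m : ℕ) :
    G (lp.single 1 m 1)
      = ∑ k ∈ range m, eVec k + ∑ k ∈ range (m + 1), eVec k - eStar := by
  ext k
  simp only [hG, lp.coeFn_single, Gfun_single, lp.coeFn_sub, lp.coeFn_add, Pi.sub_apply,
    Pi.add_apply, eVec, lp.sum_single_apply, eStar_apply, mem_range]
  split_ifs <;> first | omega | norm_num

theorem gossez_adjoint_quadratic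
    (G : ell1 →L[ℝ] ellInfty) (hG : ∀ (x : ell1) (m : ℕ), G x m = Gfun x m)
    (xss : StrongDual ℝ ellInfty) (gstar : ellInfty)
    (hgstar : ∀ x : ell1, xss (G x) = ∑' m, x m * gstar m) :
    xss gstar = -(xss eStar - ∑' m, xss (eVec m)) ^ 2 ∧ xss gstar ≤ 0 := by
  set a : ℕ → ℝ := fun m => xss (eVec m)
  set s := ∑' m, a m
  have ha : HasSum a s := (StrongDual.summable_abs_apply_lp_single_infty xss).of_abs.hasSum
  have hgstar_apply (m : ℕ) :
      gstar m = ∑ k ∈ range m, a k + ∑ k ∈ range (m + 1), a k - xss eStar := by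
    have := hgstar (lp.single 1 m 1)
    simp only [apply_single_eq_of_apply_eq_Gfun hG, map_sub, map_add, map_sum] at this
    simpa [Pi.single_apply] using this.symm
  set u : ellInfty := (2 * s - xss eStar) • eStar - gstar
  have hu_apply (m : ℕ) : u m = 2 * s - ∑ k ∈ range m, a k - ∑ k ∈ range (m + 1), a k := by
    simp only [u, lp.coeFn_sub, lp.coeFn_smul, Pi.sub_apply, Pi.smul_apply, eStar_apply,
      hgstar_apply]
    ring
  have hu : Tendsto (‖u ·‖) cofinite (𝓝 0) := by
    rw [Nat.cofinite_eq_atTop]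
    simpa [hu_apply] using ha.tendsto_two_mul_sub_sum_range_sub_sum_range_succ.norm
  have hxu : xss u = s ^ 2 := by
    refine tendsto_nhds_unique ?_ ha.tendsto_sum_range_mul_two_mul_sub_sum_range_sub_sum_range_succ
    refine (xss.hasSum (lp.hasSum_single_infty_of_tendsto_zero u hu)).tendsto_sum_nat.congr
      fun N => sum_congr rfl fun m _ => ?_
    rw [StrongDual.apply_lp_single_infty, hu_apply, mul_comm]
    rfl
  have hxgstar : xss gstar = -(xss eStar - s) ^ 2 := by
    rw [map_sub, map_smul, smul_eq_mul] at hxu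
    linear_combination -hxu
  exact ⟨hxgstar, hxgstar ▸ neg_nonpos.2 (sq_nonneg _)⟩
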